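/- Let λ be a unit of R with λᵢ = φᵢ(λ), and let C be a λ-constacyclic code of length n over R with Cᵢ = φᵢ(C). If gᵢ(x) is a generator polynomial of the λᵢ-constacyclic code Cᵢ over F_q for each i, then C = ⟨e₁g₁(x), e₂g₂(x), e₃g₃(x), e₄g₄(x)⟩ as an ideal of R[x]/(xⁿ - λ), and |C| = q^{4n - Σᵢ deg gᵢ}. -/

import Mathlib

set_option synthInstance.maxHeartbeats 1000000
set_option maxHeartbeats 1000000

noncomputable section

open MvPolynomial

/-- Generators u^2-u, v^2-v of the defining ideal. -/
def genSet (F : Type) [Field F] : Set (MvPolynomial (Fin 2) F) :=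
  {X 0 ^ 2 - X 0, X 1 ^ 2 - X 1}

/-- The ring R = F_q[u,v]/(u^2-u, v^2-v). -/
abbrev Rq (F : Type) [Field F] := MvPolynomial (Fin 2) F ⧸ Ideal.span (genSet F)

instance instCommRingRq (F : Type) [Field F] : CommRing (Rq F) := Ideal.Quotient.commRing _

/-- The image of u in R. -/
def uu (F : Type) [Field F] : Rq F := Ideal.Quotient.mk _ (X 0)

/-- The image of v in R. -/
def vv (F : Type) [Field F] : Rq F := Ideal.Quotient.mk _ (X 1)

/-- The idempotents e1 = 1-u-v+uv, e2 = uv, e3 = u-uv, e4 = v-uv. -/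
def ee (F : Type) [Field F] : Fin 4 → Rq F :=
  ![1 - uu F - vv F + uu F * vv F, uu F * vv F, uu F - uu F * vv F, vv F - uu F * vv F]

/-- Evaluation of R at a point (x,y) with x^2 = x, y^2 = y. -/
def phi4 (F : Type) [Field F] (p : Fin 2 → F) (hp : ∀ i, p i ^ 2 = p i) : Rq F →+* F :=
  Ideal.Quotient.lift _ (aeval p).toRingHom (by
    intro a ha
    have h : Ideal.span (genSet F) ≤ RingHom.ker (aeval p).toRingHom := by
      rw [Ideal.span_le]
      rintro g (rfl | rfl) <;> simp [RingHom.mem_ker, hp 0, hp 1]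
    exact h ha)

/-- The projections φ₁, φ₂, φ₃, φ₄ : R → F_q sending a+bu+cv+duv to
a, a+b+c+d, a+b, a+c respectively (i.e. evaluation at (0,0),(1,1),(1,0),(0,1)). -/
def phiI (F : Type) [Field F] : Fin 4 → (Rq F →+* F) :=
  ![phi4 F ![0,0] (by intro i; fin_cases i <;> norm_num),
    phi4 F ![1,1] (by intro i; fin_cases i <;> norm_num),
    phi4 F ![1,0] (by intro i; fin_cases i <;> norm_num),
    phi4 F ![0,1] (by intro i; fin_cases i <;> norm_num)]

/-- The ring homomorphism R[x]/(xⁿ-λ) → F[x]/(xⁿ-φᵢ(λ)) induced by φᵢ. -/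
def quotMap (F : Type) [Field F] (n : ℕ) (lam : Rq F) (i : Fin 4) :
    (Polynomial (Rq F) ⧸ Ideal.span {Polynomial.X ^ n - Polynomial.C lam}) →+*
    (Polynomial F ⧸ Ideal.span {Polynomial.X ^ n - Polynomial.C (phiI F i lam)}) :=
  Ideal.Quotient.lift _
    ((Ideal.Quotient.mk (Ideal.span {Polynomial.X ^ n - Polynomial.C (phiI F i lam)})).comp
      (Polynomial.mapRingHom (phiI F i))) (by
    intro a ha
    have h : Ideal.span {Polynomial.X ^ n - Polynomial.C lam} ≤
        RingHom.ker ((Ideal.Quotient.mk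
            (Ideal.span {Polynomial.X ^ n - Polynomial.C (phiI F i lam)})).comp
          (Polynomial.mapRingHom (phiI F i))) := by
      rw [Ideal.span_le]
      rintro g rfl
      have : (Polynomial.mapRingHom (phiI F i)) (Polynomial.X ^ n - Polynomial.C lam) =
          Polynomial.X ^ n - Polynomial.C (phiI F i lam) := by
        simp
      simp only [SetLike.mem_coe, RingHom.mem_ker, RingHom.comp_apply, this,
        Ideal.Quotient.eq_zero_iff_mem]
      exact Ideal.subset_span rfl
    exact h ha)

/-!
Evaluation at the four points of `{0,1}²` identifies `R` with `F⁴`, and `eⱼ r = φⱼ(r) eⱼ`.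
Hence the maps induced by the `φᵢ` identify `R[x]/(xⁿ - λ)` with `∏ᵢ F[x]/(xⁿ - λᵢ)`, the
`eᵢ` going to the standard idempotents of the product. An ideal of such a product is the
product of its projections `Cᵢ = ⟨gᵢ⟩`, which gives both the generators `eᵢ gᵢ` and
`|C| = ∏ |Cᵢ|`; finally multiplication by `gᵢ` identifies `F[x]/((xⁿ - λᵢ)/gᵢ)` with `⟨gᵢ⟩`,
so `|Cᵢ| = q^(n - deg gᵢ)`.
-/

section OrthogonalIdempotents

variable {ι A : Type*} [DecidableEq ι] [CommRing A] {B : ι → Type*}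
  [∀ i, CommRing (B i)] {π : ∀ i, A →+* B i} {ε : ι → A}

lemma mul_eq_mul_of_pi_injective (hπ : Function.Injective (RingHom.pi π))
    (hε : ∀ i j, π j (ε i) = if i = j then 1 else 0) {i : ι} {a b : A} (h : π i a = π i b) :
    ε i * a = ε i * b := by
  refine hπ (funext fun j => ?_)
  simp only [RingHom.pi_apply, map_mul, hε]
  split_ifs with hij
  · rw [← hij, h]
  · rw [zero_mul, zero_mul]

lemma sum_eq_one_of_pi_injective [Fintype ι] (hπ : Function.Injective (RingHom.pi π))
    (hε : ∀ i j, π j (ε i) = if i = j then 1 else 0) : ∑ i, ε i = 1 :=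
  hπ (funext fun j => by simp [map_sum, hε])

lemma Ideal.eq_span_range_mul_of_map_eq_span [Fintype ι] (hπ : Function.Injective (RingHom.pi π))
    (hsurj : ∀ i, Function.Surjective (π i)) (hε : ∀ i j, π j (ε i) = if i = j then 1 else 0)
    (C : Ideal A) (s : ι → A) (hC : ∀ i, C.map (π i) = Ideal.span {π i (s i)}) :
    C = Ideal.span (Set.range fun i => ε i * s i) := by
  apply le_antisymm
  · intro c hc
    rw [← one_mul c, ← sum_eq_one_of_pi_injective hπ hε, Finset.sum_mul]
    refine Ideal.sum_mem _ fun i _ => ?_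
    obtain ⟨b, hb⟩ := Ideal.mem_span_singleton'.1 (hC i ▸ Ideal.mem_map_of_mem (π i) hc)
    obtain ⟨a, rfl⟩ := hsurj i b
    rw [mul_eq_mul_of_pi_injective hπ hε (b := s i * a) (by rw [map_mul, ← hb, mul_comm]),
      ← mul_assoc]
    exact Ideal.mul_mem_right _ _ (Ideal.subset_span ⟨i, rfl⟩)
  · rw [Ideal.span_le]
    rintro _ ⟨i, rfl⟩
    obtain ⟨c, hc, hcs⟩ := (Ideal.mem_map_iff_of_surjective _ (hsurj i)).1
      (hC i ▸ Ideal.mem_span_singleton_self (π i (s i)))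
    show ε i * s i ∈ C
    rw [← mul_eq_mul_of_pi_injective hπ hε hcs]
    exact C.mul_mem_left _ hc

lemma Ideal.natCard_eq_prod_natCard_map [Fintype ι] (hπ : Function.Injective (RingHom.pi π))
    (hsurj : ∀ i, Function.Surjective (π i)) (hε : ∀ i j, π j (ε i) = if i = j then 1 else 0)
    (C : Ideal A) : Nat.card C = ∏ i, Nat.card (C.map (π i)) := by
  rw [← Nat.card_pi]
  refine Nat.card_congr (Equiv.ofBijective (fun c i => ⟨π i c, Ideal.mem_map_of_mem _ c.2⟩)
    ⟨fun c d h => Subtype.ext (hπ (funext fun i => congrArg Subtype.val (congrFun h i))), ?_⟩)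
  intro t
  choose c hc hct using fun i => (Ideal.mem_map_iff_of_surjective _ (hsurj i)).1 (t i).2
  refine ⟨⟨∑ i, ε i * c i, Ideal.sum_mem _ fun i _ => C.mul_mem_left _ (hc i)⟩,
    funext fun j => Subtype.ext ?_⟩
  simp [map_sum, hε, hct]

end OrthogonalIdempotents

section Idempotents

variable (F : Type) [Field F]

lemma uu_sq : uu F ^ 2 = uu F := by
  rw [uu, ← map_pow, Ideal.Quotient.eq]
  exact Ideal.subset_span (Or.inl rfl)

lemma vv_sq : vv F ^ 2 = vv F := by
  rw [vv, ← map_pow, Ideal.Quotient.eq]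
  exact Ideal.subset_span (Or.inr rfl)

lemma phiI_algebraMap (j : Fin 4) (a : F) : phiI F j (algebraMap F (Rq F) a) = a := by
  rw [← Ideal.Quotient.mk_algebraMap]
  fin_cases j <;> simp [phiI, phi4]

lemma phiI_uu (j : Fin 4) : phiI F j (uu F) = ![0, 1, 1, 0] j := by
  fin_cases j <;> simp [phiI, phi4, uu]

lemma phiI_vv (j : Fin 4) : phiI F j (vv F) = ![0, 1, 0, 1] j := by
  fin_cases j <;> simp [phiI, phi4, vv]

lemma ee_mul_uu (j : Fin 4) : ee F j * uu F = algebraMap F (Rq F) (phiI F j (uu F)) * ee F j := by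
  have hu := uu_sq F
  fin_cases j <;> simp [ee, phiI_uu] <;> grind

lemma ee_mul_vv (j : Fin 4) : ee F j * vv F = algebraMap F (Rq F) (phiI F j (vv F)) * ee F j := by
  have hv := vv_sq F
  fin_cases j <;> simp [ee, phiI_vv] <;> grind

lemma ee_mul (j : Fin 4) (r : Rq F) : ee F j * r = algebraMap F (Rq F) (phiI F j r) * ee F j := by
  obtain ⟨p, rfl⟩ := Ideal.Quotient.mk_surjective r
  induction p using MvPolynomial.induction_on with
  | C a =>
    rw [← MvPolynomial.algebraMap_eq, Ideal.Quotient.mk_algebraMap, phiI_algebraMap, mul_comm]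
  | add p q hp hq => rw [map_add, mul_add, hp, hq, map_add, map_add, add_mul]
  | mul_X p k hp =>
    have hX : ee F j * Ideal.Quotient.mk _ (X k) =
        algebraMap F (Rq F) (phiI F j (Ideal.Quotient.mk _ (X k))) * ee F j := by
      fin_cases k
      · exact ee_mul_uu F j
      · exact ee_mul_vv F j
    rw [map_mul, map_mul, map_mul, ← mul_assoc, hp, mul_assoc, hX, mul_assoc]

lemma phiI_ee (i j : Fin 4) : phiI F j (ee F i) = if i = j then 1 else 0 := by
  fin_cases i <;> fin_cases j <;> simp [ee, phiI_uu, phiI_vv]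

lemma sum_ee : ∑ i, ee F i = 1 := by
  simp only [ee, Fin.sum_univ_four, Matrix.cons_val_zero, Matrix.cons_val_one, Matrix.cons_val]
  ring

end Idempotents

section CyclicQuotient

open scoped Polynomial

variable (F : Type) [Field F] (n : ℕ) (lam : Rq F)

lemma C_ee_mul_eq_map_phiI (j : Fin 4) (p : (Rq F)[X]) :
    Polynomial.C (ee F j) * p =
      Polynomial.C (ee F j) * (p.map (phiI F j)).map (algebraMap F (Rq F)) := by
  ext k
  simp only [Polynomial.coeff_C_mul, Polynomial.coeff_map]
  rw [ee_mul, ee_mul F j (algebraMap _ _ _), phiI_algebraMap]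

lemma quotMap_injective : Function.Injective (RingHom.pi (quotMap F n lam)) := by
  rw [injective_iff_map_eq_zero]
  intro z hz
  obtain ⟨p, rfl⟩ := Ideal.Quotient.mk_surjective z
  rw [Ideal.Quotient.eq_zero_iff_mem, Ideal.mem_span_singleton, ← one_mul p,
    ← map_one Polynomial.C, ← sum_ee, map_sum, Finset.sum_mul]
  refine Finset.dvd_sum fun j _ => ?_
  -- `eⱼ p` only depends on `φⱼ(p)`, which is a multiple of `xⁿ - φⱼ(λ)`.
  have hj : Ideal.Quotient.mk _ (p.map (phiI F j)) = 0 := congrFun hz j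
  obtain ⟨q, hq⟩ := Ideal.mem_span_singleton.1 (Ideal.Quotient.eq_zero_iff_mem.1 hj)
  have hmod := C_ee_mul_eq_map_phiI F j (Polynomial.X ^ n - Polynomial.C lam)
  refine ⟨Polynomial.C (ee F j) * q.map (algebraMap F (Rq F)), ?_⟩
  rw [C_ee_mul_eq_map_phiI, hq, Polynomial.map_mul, ← mul_assoc]
  simp only [Polynomial.map_sub, Polynomial.map_pow, Polynomial.map_X, Polynomial.map_C] at hmod ⊢
  rw [← hmod]
  ring

lemma quotMap_mk_C_ee (i j : Fin 4) :
    quotMap F n lam j (Ideal.Quotient.mk _ (Polynomial.C (ee F i))) = if i = j then 1 else 0 := by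
  change Ideal.Quotient.mk _ ((Polynomial.C (ee F i)).map (phiI F j)) = _
  rw [Polynomial.map_C, phiI_ee]
  split_ifs <;> simp

lemma quotMap_mk_map_algebraMap (j : Fin 4) (h : F[X]) :
    quotMap F n lam j (Ideal.Quotient.mk _ (h.map (algebraMap F (Rq F)))) =
      Ideal.Quotient.mk _ h := by
  change Ideal.Quotient.mk _ ((h.map (algebraMap F (Rq F))).map (phiI F j)) = _
  rw [Polynomial.map_map, show (phiI F j).comp (algebraMap F (Rq F)) = RingHom.id F from
    RingHom.ext (phiI_algebraMap F j), Polynomial.map_id]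

lemma quotMap_surjective (j : Fin 4) : Function.Surjective (quotMap F n lam j) := by
  intro y
  obtain ⟨h, rfl⟩ := Ideal.Quotient.mk_surjective y
  exact ⟨_, quotMap_mk_map_algebraMap F n lam j h⟩

end CyclicQuotient

section FiniteField

open scoped Polynomial

variable {K : Type*} [Field K] [Fintype K]

lemma natCard_quotient_span_singleton {k : K[X]} (hk : k ≠ 0) :
    Nat.card (K[X] ⧸ Ideal.span {k}) = Fintype.card K ^ k.natDegree := by
  have : Module.Finite K (K[X] ⧸ Ideal.span {k}) := (AdjoinRoot.powerBasis hk).finite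
  rw [Module.natCard_eq_pow_finrank (K := K), finrank_quotient_span_eq_natDegree,
    Nat.card_eq_fintype_card]

lemma natCard_span_mk_of_dvd {f g : K[X]} (hf : f ≠ 0) (hg : g ∣ f) :
    Nat.card (Ideal.span {Ideal.Quotient.mk (Ideal.span {f}) g}) =
      Fintype.card K ^ (f.natDegree - g.natDegree) := by
  obtain ⟨k, rfl⟩ := hg
  have hg0 : g ≠ 0 := left_ne_zero_of_mul hf
  have hk0 : k ≠ 0 := right_ne_zero_of_mul hf
  let L : K[X] →ₗ[K[X]] K[X] ⧸ Ideal.span {g * k} :=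
    (Ideal.span {g * k}).mkQ ∘ₗ LinearMap.mulLeft K[X] g
  have hker : LinearMap.ker L = Ideal.span {k} := by
    ext p
    change Ideal.Quotient.mk _ (g * p) = 0 ↔ p ∈ Ideal.span {k}
    rw [Ideal.Quotient.eq_zero_iff_mem, Ideal.mem_span_singleton, Ideal.mem_span_singleton,
      mul_dvd_mul_iff_left hg0]
  have hrange : ∀ x, x ∈ Ideal.span {Ideal.Quotient.mk _ g} ↔ x ∈ LinearMap.range L := by
    intro x
    rw [Ideal.mem_span_singleton', LinearMap.mem_range]
    constructor
    · rintro ⟨a, rfl⟩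
      obtain ⟨p, rfl⟩ := Ideal.Quotient.mk_surjective a
      exact ⟨p, by simp [L, mul_comm]⟩
    · rintro ⟨p, rfl⟩
      exact ⟨Ideal.Quotient.mk _ p, by simp [L, mul_comm]⟩
  calc Nat.card (Ideal.span {Ideal.Quotient.mk (Ideal.span {g * k}) g})
      = Nat.card (LinearMap.range L) := Nat.card_congr (Equiv.subtypeEquivRight hrange)
    _ = Nat.card (K[X] ⧸ Ideal.span {k}) :=
      Nat.card_congr (L.quotKerEquivRange.symm.trans (Submodule.quotEquivOfEq _ _ hker)).toEquiv
    _ = Fintype.card K ^ ((g * k).natDegree - g.natDegree) := by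
      rw [natCard_quotient_span_singleton hk0, Polynomial.natDegree_mul hg0 hk0,
        Nat.add_sub_cancel_left]

end FiniteField

theorem stmt8_general (F : Type) [Field F] [Fintype F] (n : ℕ) (hn : 0 < n)
    (lam : Rq F)
    (C : Ideal (Polynomial (Rq F) ⧸ Ideal.span {Polynomial.X ^ n - Polynomial.C lam}))
    (g : Fin 4 → Polynomial F)
    (hdvd : ∀ i, g i ∣ Polynomial.X ^ n - Polynomial.C (phiI F i lam))
    (hgen : ∀ i, Ideal.map (quotMap F n lam i) C =
      Ideal.span {Ideal.Quotient.mk _ (g i)}) :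
    C = Ideal.span (Set.range fun i : Fin 4 =>
        Ideal.Quotient.mk _ (Polynomial.C (ee F i) * (g i).map (algebraMap F (Rq F)))) ∧
    Nat.card C = Fintype.card F ^ (4 * n - ∑ i, (g i).natDegree) := by
  have hπ := quotMap_injective F n lam
  have hsurj := quotMap_surjective F n lam
  have hε := quotMap_mk_C_ee F n lam
  have hf (i : Fin 4) : Polynomial.X ^ n - Polynomial.C (phiI F i lam) ≠ 0 :=
    Polynomial.X_pow_sub_C_ne_zero hn _
  have hdeg (i : Fin 4) : (g i).natDegree ≤ n := by
    simpa using Polynomial.natDegree_le_of_dvd (hdvd i) (hf i)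
  constructor
  · simp_rw [map_mul]
    refine Ideal.eq_span_range_mul_of_map_eq_span hπ hsurj hε C _ fun i => ?_
    rw [hgen, quotMap_mk_map_algebraMap]
  · rw [Ideal.natCard_eq_prod_natCard_map hπ hsurj hε C]
    simp_rw [hgen, natCard_span_mk_of_dvd (hf _) (hdvd _), Polynomial.natDegree_X_pow_sub_C]
    rw [Finset.prod_pow_eq_pow_sum, Finset.sum_tsub_distrib _ fun i _ => hdeg i]
    simp [mul_comm]

theorem stmt8 (F : Type) [Field F] [Fintype F] (n : ℕ) (hn : 0 < n)
    (lam : Rq F) (hlam : IsUnit lam)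
    (C : Ideal (Polynomial (Rq F) ⧸ Ideal.span {Polynomial.X ^ n - Polynomial.C lam}))
    (g : Fin 4 → Polynomial F)
    (hmonic : ∀ i, (g i).Monic)
    (hdvd : ∀ i, g i ∣ Polynomial.X ^ n - Polynomial.C (phiI F i lam))
    (hgen : ∀ i, Ideal.map (quotMap F n lam i) C =
      Ideal.span {Ideal.Quotient.mk _ (g i)}) :
    C = Ideal.span (Set.range fun i : Fin 4 =>
        Ideal.Quotient.mk _ (Polynomial.C (ee F i) * (g i).map (algebraMap F (Rq F)))) ∧
    Nat.card C = Fintype.card F ^ (4 * n - ∑ i, (g i).natDegree) :=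
  stmt8_general F n hn lam C g hdvd hgen
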